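/- arXiv:1301.6586 — 5 statements merged into one kernel-verified Lean document; each statement's English description precedes it below -/
import Mathlib

section
/- If f : (-1,1) → ℝ is twice differentiable, satisfies d/dz[(1-z²)f'(z)] = -2 - 2 ln((z+1)/2) on (-1,1), is bounded near z = 1, and tends to 0 as z → 1⁻, then f(z) = -2·Li₂((1-z)/2) for all z ∈ (-1,1). -/
open Real Filter Set
set_option maxHeartbeats 1000000

noncomputable def Li2 (x : ℝ) : ℝ := ∑' k : ℕ, x ^ (k + 1) / ((k : ℝ) + 1) ^ 2

noncomputable def Li3 (x : ℝ) : ℝ := ∑' k : ℕ, x ^ (k + 1) / ((k : ℝ) + 1) ^ 3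


lemma summable_inv_sq : Summable (fun k : ℕ => 1 / ((k : ℝ) + 1) ^ 2) := by
  have h : Summable (fun n : ℕ => 1 / ((n : ℝ)) ^ 2) :=
    Real.summable_one_div_nat_pow.mpr one_lt_two
  have := (summable_nat_add_iff 1).mpr h
  convert this using 2 with k
  rfl; push_cast; ring

lemma li2_hasDerivAt {x : ℝ} (hx : |x| < 1) :
    HasDerivAt Li2 (∑' k : ℕ, x ^ k / ((k : ℝ) + 1)) x := by
  set r : ℝ := (|x| + 1) / 2 with hr
  have hr0 : 0 ≤ r := by positivity
  have hr1 : r < 1 := by rw [hr]; linarith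
  have hxr : |x| < r := by rw [hr]; linarith
  have hrpos : 0 < r := lt_of_le_of_lt (abs_nonneg x) hxr
  have := hasDerivAt_tsum_of_isPreconnected
    (u := fun n : ℕ => r ^ n)
    (g := fun (n : ℕ) (y : ℝ) => y ^ (n + 1) / ((n : ℝ) + 1) ^ 2)
    (g' := fun (n : ℕ) (y : ℝ) => y ^ n / ((n : ℝ) + 1))
    (t := Metric.ball (0 : ℝ) r) (y₀ := (0 : ℝ)) (y := x)
    (summable_geometric_of_lt_one hr0 hr1) Metric.isOpen_ball
    ((convex_ball (0:ℝ) r).isPreconnected)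
    (fun n y _ => by
      have h1 : ((n : ℝ) + 1) ≠ 0 := by positivity
      have := (hasDerivAt_pow (n + 1) y).div_const (((n : ℝ) + 1) ^ 2)
      refine this.congr_deriv ?_
      push_cast
      field_simp)
    (fun n y hy => by
      have hy' : |y| ≤ r := by
        rw [Metric.mem_ball, Real.dist_eq, sub_zero] at hy
        exact le_of_lt hy
      have h1 : (1 : ℝ) ≤ (n : ℝ) + 1 := by
        have : (0:ℝ) ≤ (n:ℝ) := Nat.cast_nonneg n
        linarith
      calc ‖y ^ n / ((n : ℝ) + 1)‖ = |y| ^ n / ((n : ℝ) + 1) := by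
            rw [Real.norm_eq_abs, abs_div, abs_pow,
              abs_of_pos (show (0:ℝ) < (n:ℝ) + 1 by positivity)]
        _ ≤ |y| ^ n := by
            apply div_le_self (by positivity) h1
        _ ≤ r ^ n := pow_le_pow_left₀ (abs_nonneg y) hy' n)
    (Metric.mem_ball_self hrpos)
    (by
      apply Summable.congr summable_zero
      intro n; simp)
    (by rw [Metric.mem_ball, Real.dist_eq, sub_zero]; exact hxr)
  exact this

lemma li2_deriv_eq {x : ℝ} (hx0 : 0 < x) (hx1 : x < 1) :
    HasDerivAt Li2 (-Real.log (1 - x) / x) x := by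
  have hx : |x| < 1 := by rw [abs_of_pos hx0]; exact hx1
  have h := li2_hasDerivAt hx
  have hsum := Real.hasSum_pow_div_log_of_abs_lt_one hx
  have hx' : x ≠ 0 := ne_of_gt hx0
  have h2 := hsum.mul_right x⁻¹
  have h3 : (fun n : ℕ => x ^ (n + 1) / ((n : ℝ) + 1) * x⁻¹) = fun n : ℕ => x ^ n / ((n : ℝ) + 1) := by
    funext n
    field_simp
    ring
  rw [h3] at h2
  have := h2.tsum_eq
  rw [this] at h
  convert h using 1
  rw [div_eq_mul_inv]


lemma li2_nonneg {x : ℝ} (h0 : 0 ≤ x) : 0 ≤ Li2 x :=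
  tsum_nonneg fun k => by positivity

lemma li2_le {x : ℝ} (h0 : 0 ≤ x) (h1 : x ≤ 1) :
    Li2 x ≤ x * ∑' k : ℕ, 1 / ((k : ℝ) + 1) ^ 2 := by
  have hS := summable_inv_sq
  have hterm : ∀ k : ℕ, x ^ (k + 1) / ((k : ℝ) + 1) ^ 2 ≤ x * (1 / ((k : ℝ) + 1) ^ 2) := by
    intro k
    have hp : x ^ (k + 1) ≤ x := by
      calc x ^ (k + 1) = x * x ^ k := by ring
        _ ≤ x * 1 := by
            apply mul_le_mul_of_nonneg_left (pow_le_one₀ h0 h1) h0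
        _ = x := mul_one x
    rw [mul_one_div]
    exact div_le_div_of_nonneg_right hp (by positivity) |>.trans_eq rfl
  have hsum1 : Summable (fun k : ℕ => x ^ (k + 1) / ((k : ℝ) + 1) ^ 2) := by
    apply Summable.of_nonneg_of_le (fun k => by positivity) hterm (hS.mul_left x)
  calc Li2 x ≤ ∑' k : ℕ, x * (1 / ((k : ℝ) + 1) ^ 2) := Summable.tsum_le_tsum hterm hsum1 (hS.mul_left x)
    _ = x * ∑' k : ℕ, 1 / ((k : ℝ) + 1) ^ 2 := by rw [tsum_mul_left]

lemma const_of_hasDerivAt_zero {g : ℝ → ℝ} {a b x y : ℝ}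
    (hg : ∀ z ∈ Ioo a b, HasDerivAt g 0 z)
    (hx : x ∈ Ioo a b) (hy : y ∈ Ioo a b) : g x = g y := by
  apply (convex_Ioo a b).is_const_of_fderivWithin_eq_zero (𝕜 := ℝ)
    (fun z hz => (hg z hz).differentiableAt.differentiableWithinAt)
    (fun z hz => ?_) hx hy
  rw [fderivWithin_of_isOpen isOpen_Ioo hz, (hg z hz).hasFDerivAt.fderiv]
  ext t
  simp

lemma U_hasDerivAt {z : ℝ} (h1 : -1 < z) (h2 : z < 1) :
    HasDerivAt (fun w : ℝ => -2 * Li2 ((1 - w) / 2)) (-2 * Real.log ((1 + z) / 2) / (1 - z)) z := by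
  have hx0 : 0 < (1 - z) / 2 := by linarith
  have hx1 : (1 - z) / 2 < 1 := by linarith
  have hz1 : (1 : ℝ) - z ≠ 0 := by intro h; linarith [sub_eq_zero.mp h]
  have hi : HasDerivAt (fun w : ℝ => (1 - w) / 2) (-1 / 2 : ℝ) z := by
    simpa using ((hasDerivAt_const z (1 : ℝ)).sub (hasDerivAt_id z)).div_const 2
  have h := (HasDerivAt.comp z (li2_deriv_eq hx0 hx1) hi).const_mul (-2 : ℝ)
  refine h.congr_deriv ?_
  rw [show (1 : ℝ) - (1 - z) / 2 = (1 + z) / 2 by ring]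
  field_simp

theorem second_deriv_uniqueness (f : ℝ → ℝ)
    (hdiff : ∀ z : ℝ, -1 < z → z < 1 →
      DifferentiableAt ℝ f z ∧ DifferentiableAt ℝ (deriv f) z)
    (heq : ∀ z : ℝ, -1 < z → z < 1 →
      deriv (fun z : ℝ => (1 - z ^ 2) * deriv f z) z = -2 - 2 * Real.log ((z + 1) / 2))
    (hbdd : ∃ C : ℝ, ∀ᶠ z in nhdsWithin 1 (Iio 1), |f z| ≤ C)
    (hlim : Tendsto f (nhdsWithin 1 (Iio 1)) (nhds 0)) :
    ∀ z : ℝ, -1 < z → z < 1 → f z = -2 * Li2 ((1 - z) / 2) := by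
  set S : ℝ := ∑' k : ℕ, 1 / ((k : ℝ) + 1) ^ 2 with hSdef
  have hSnn : 0 ≤ S := tsum_nonneg fun k => by positivity
  set l : Filter ℝ := nhdsWithin 1 (Iio 1) with hldef
  -- Step 1 : derivative of W z = (1-z²) f'(z) + 2(1+z) log((1+z)/2) is zero
  have hWd : ∀ z ∈ Ioo (-1 : ℝ) 1, HasDerivAt
      (fun z : ℝ => (1 - z ^ 2) * deriv f z + 2 * (1 + z) * Real.log ((1 + z) / 2)) 0 z := by
    rintro z ⟨hz1, hz2⟩
    have h1z : (0 : ℝ) < 1 + z := by linarith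
    have hA : DifferentiableAt ℝ (fun z : ℝ => (1 - z ^ 2) * deriv f z) z :=
      ((differentiableAt_const 1).sub (differentiableAt_pow 2)).mul (hdiff z hz1 hz2).2
    have hA' : HasDerivAt (fun z : ℝ => (1 - z ^ 2) * deriv f z)
        (-2 - 2 * Real.log ((z + 1) / 2)) z := by
      rw [← heq z hz1 hz2]; exact hA.hasDerivAt
    have h1 : HasDerivAt (fun z : ℝ => 2 * (1 + z)) 2 z := by
      simpa using ((hasDerivAt_id z).const_add (1 : ℝ)).const_mul (2 : ℝ)
    have h2 : HasDerivAt (fun z : ℝ => (1 + z) / 2) (1 / 2) z := by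
      simpa using ((hasDerivAt_id z).const_add (1 : ℝ)).div_const 2
    have h3 := h2.log (by positivity)
    have hB := h1.mul h3
    have := hA'.add hB
    refine this.congr_deriv ?_
    rw [add_comm z 1]
    field_simp
    ring
  obtain ⟨c, hWc⟩ : ∃ c, ∀ z ∈ Ioo (-1 : ℝ) 1,
      (1 - z ^ 2) * deriv f z + 2 * (1 + z) * Real.log ((1 + z) / 2) = c :=
    ⟨_, fun z hz => const_of_hasDerivAt_zero hWd hz (by norm_num : (0:ℝ) ∈ Ioo (-1:ℝ) 1)⟩
  -- Step 2 : φ z = f z - U z - c/2 (log(1+z) - log(1-z)) has zero derivative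
  have hφd : ∀ z ∈ Ioo (-1 : ℝ) 1, HasDerivAt
      (fun z : ℝ => f z - -2 * Li2 ((1 - z) / 2)
        - c / 2 * (Real.log (1 + z) - Real.log (1 - z))) 0 z := by
    rintro z ⟨hz1, hz2⟩
    have h1z : (0 : ℝ) < 1 + z := by linarith
    have h2z : (0 : ℝ) < 1 - z := by linarith
    have hf : HasDerivAt f (deriv f z) z := (hdiff z hz1 hz2).1.hasDerivAt
    have hU := U_hasDerivAt hz1 hz2
    have hl1 : HasDerivAt (fun z : ℝ => Real.log (1 + z)) (1 / (1 + z)) z := by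
      simpa using ((hasDerivAt_id z).const_add (1 : ℝ)).log (ne_of_gt h1z)
    have hl2 : HasDerivAt (fun z : ℝ => Real.log (1 - z)) (-1 / (1 - z)) z := by
      simpa using ((hasDerivAt_const z (1 : ℝ)).sub (hasDerivAt_id z)).log (ne_of_gt h2z)
    have hlog := (hl1.sub hl2).const_mul (c / 2)
    have hcomb := (hf.sub hU).sub hlog
    have hdf : deriv f z = (c - 2 * (1 + z) * Real.log ((1 + z) / 2)) / (1 - z ^ 2) := by
      have hne : (1 : ℝ) - z ^ 2 ≠ 0 := by nlinarith
      have := hWc z ⟨hz1, hz2⟩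
      field_simp
      linarith
    have hne : (1 : ℝ) - z ^ 2 ≠ 0 := by nlinarith
    refine hcomb.congr_deriv ?_
    rw [hdf]
    field_simp
    ring
  obtain ⟨A, hA⟩ : ∃ A, ∀ z ∈ Ioo (-1 : ℝ) 1,
      f z - -2 * Li2 ((1 - z) / 2) - c / 2 * (Real.log (1 + z) - Real.log (1 - z)) = A :=
    ⟨_, fun z hz => const_of_hasDerivAt_zero hφd hz (by norm_num : (0:ℝ) ∈ Ioo (-1:ℝ) 1)⟩
  -- basic filter facts
  have ev_mem : ∀ᶠ z in l, z ∈ Ioo (0 : ℝ) 1 := by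
    have h1 : ∀ᶠ z in l, z < 1 := eventually_mem_nhdsWithin
    have h2 : ∀ᶠ z in l, 0 < z :=
      Filter.Eventually.filter_mono nhdsWithin_le_nhds (eventually_gt_nhds (by norm_num))
    filter_upwards [h1, h2] with z hz1 hz2
    exact ⟨hz2, hz1⟩
  have hUb : ∀ z ∈ Ioo (0 : ℝ) 1, |(-2 : ℝ) * Li2 ((1 - z) / 2)| ≤ (1 - z) * S := by
    rintro z ⟨hz1, hz2⟩
    have hx0 : (0 : ℝ) ≤ (1 - z) / 2 := by linarith
    have hx1 : (1 - z) / 2 ≤ 1 := by linarith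
    have h1 := li2_nonneg hx0
    have h2 := li2_le hx0 hx1
    rw [abs_mul, abs_of_nonneg h1]
    rw [show |(-2 : ℝ)| = 2 by norm_num]
    nlinarith
  have tlim : Tendsto (fun z : ℝ => (1 - z) * S) l (nhds 0) := by
    have hcont : Continuous (fun z : ℝ => (1 - z) * S) := by fun_prop
    have h : Tendsto (fun z : ℝ => (1 - z) * S) l (nhds ((1 - 1) * S)) :=
      (hcont.tendsto 1).mono_left nhdsWithin_le_nhds
    simpa using h
  -- c = 0
  have hc0 : c = 0 := by
    by_contra hc
    have hXtop : Tendsto (fun z : ℝ => Real.log (1 + z) - Real.log (1 - z)) l atTop := by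
      have t0 : Tendsto (fun z : ℝ => (1 : ℝ) + z) l (nhds 2) := by
        have hcont : Continuous (fun z : ℝ => (1 : ℝ) + z) := by fun_prop
        have h : Tendsto (fun z : ℝ => (1 : ℝ) + z) l (nhds (1 + 1)) :=
          (hcont.tendsto 1).mono_left nhdsWithin_le_nhds
        norm_num at h
        exact h
      have t1 : Tendsto (fun z : ℝ => Real.log (1 + z)) l (nhds (Real.log 2)) :=
        (Real.continuousAt_log (by norm_num)).tendsto.comp t0
      have t2 : Tendsto (fun z : ℝ => (1 : ℝ) - z) l (nhdsWithin 0 (Ioi 0)) := by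
        rw [tendsto_nhdsWithin_iff]
        constructor
        · have hcont : Continuous (fun z : ℝ => (1 : ℝ) - z) := by fun_prop
          have h : Tendsto (fun z : ℝ => (1 : ℝ) - z) l (nhds (1 - 1)) :=
            (hcont.tendsto 1).mono_left nhdsWithin_le_nhds
          norm_num at h
          exact h
        · filter_upwards [eventually_mem_nhdsWithin] with z hz
          exact sub_pos.mpr (mem_Iio.mp hz)
      have t3 : Tendsto (fun z : ℝ => Real.log (1 - z)) l atBot :=
        Real.tendsto_log_nhdsGT_zero.comp t2
      have t4 : Tendsto (fun z : ℝ => -Real.log (1 - z)) l atTop :=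
        tendsto_neg_atTop_iff.mpr t3
      simpa [sub_eq_add_neg] using t1.add_atTop t4
    have hpos : 0 < |c / 2| := abs_pos.mpr (div_ne_zero hc two_ne_zero)
    have t5 := hXtop.const_mul_atTop hpos
    obtain ⟨C, hC⟩ := hbdd
    have hcontra : ∀ᶠ z in l,
        |c / 2| * (Real.log (1 + z) - Real.log (1 - z)) ≤ C + S + |A| := by
      filter_upwards [hC, ev_mem] with z hz1 hz2
      have hmem : z ∈ Ioo (-1 : ℝ) 1 := ⟨by linarith [hz2.1], hz2.2⟩
      have hAz := hA z hmem
      have hUz := hUb z hz2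
      have hUz' : |(-2 : ℝ) * Li2 ((1 - z) / 2)| ≤ S := by nlinarith [hz2.1]
      have heqz : c / 2 * (Real.log (1 + z) - Real.log (1 - z))
          = f z - -2 * Li2 ((1 - z) / 2) - A := by linarith
      calc |c / 2| * (Real.log (1 + z) - Real.log (1 - z))
          ≤ |c / 2 * (Real.log (1 + z) - Real.log (1 - z))| := by
            rw [abs_mul]
            exact mul_le_mul_of_nonneg_left (le_abs_self _) (abs_nonneg _)
        _ = |f z - -2 * Li2 ((1 - z) / 2) - A| := by rw [heqz]
        _ ≤ |f z - -2 * Li2 ((1 - z) / 2)| + |A| := abs_sub _ _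
        _ ≤ |f z| + |(-2 : ℝ) * Li2 ((1 - z) / 2)| + |A| := by
            have := abs_sub (f z) (-2 * Li2 ((1 - z) / 2))
            linarith
        _ ≤ C + S + |A| := by linarith
    obtain ⟨z, h1, h2⟩ := ((t5.eventually_ge_atTop (C + S + |A| + 1)).and hcontra).exists
    linarith
  -- A = 0
  have hUlim : Tendsto (fun z : ℝ => (-2 : ℝ) * Li2 ((1 - z) / 2)) l (nhds 0) := by
    apply squeeze_zero_norm' _ tlim
    filter_upwards [ev_mem] with z hz
    exact hUb z hz
  have hflim : Tendsto (fun z : ℝ => f z - -2 * Li2 ((1 - z) / 2)) l (nhds 0) := by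
    simpa using hlim.sub hUlim
  have hA0 : A = 0 := by
    have hev : (fun z : ℝ => f z - -2 * Li2 ((1 - z) / 2)) =ᶠ[l] fun _ => A := by
      filter_upwards [ev_mem] with z hz
      have hmem : z ∈ Ioo (-1 : ℝ) 1 := ⟨by linarith [hz.1], hz.2⟩
      have := hA z hmem
      rw [hc0] at this
      simpa using this
    have := hflim.congr' hev
    exact tendsto_nhds_unique tendsto_const_nhds this
  intro z hz1 hz2
  have := hA z ⟨hz1, hz2⟩
  rw [hc0, hA0] at this
  simp at this
  linarith
end

section
/- For real z with |z| < 1, the Legendre function P_ν(z) (for ν in a neighborhood of 0) admits the Maclaurin expansion in ν: P_ν(z) = 1 + ν·ln((z+1)/2) - ν²·Li₂((1-z)/2) + O(ν³). -/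
open Real Filter Set

/-- The Gauss hypergeometric series ₂F₁(-ν, ν+1; 1; x), where (1)_k = k!. -/
noncomputable def F (ν x : ℝ) : ℝ :=
  ∑' k : ℕ, ((∏ i ∈ Finset.range k, (-ν + i)) * (∏ i ∈ Finset.range k, (ν + 1 + i))
    / ((k.factorial : ℝ) ^ 2)) * x ^ k

noncomputable def legP (ν : ℝ) (k : ℕ) : ℝ := ∏ i ∈ Finset.range k, (((i:ℝ)+1)^2 - ν^2)
noncomputable def legA (k : ℕ) : ℝ := ∏ i ∈ Finset.range k, ((i:ℝ)+1)^2

lemma legA_eq (k : ℕ) : legA k = ((k.factorial : ℝ))^2 := by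
  rw [legA, Finset.prod_pow]
  congr 1
  have := Finset.prod_range_add_one_eq_factorial k
  calc ∏ x ∈ Finset.range k, ((x:ℝ) + 1) = ((∏ x ∈ Finset.range k, (x + 1) : ℕ) : ℝ) := by
        push_cast; rfl
    _ = (k.factorial : ℝ) := by rw [this]

lemma legA_pos (k : ℕ) : 0 < legA k := by
  rw [legA_eq]; positivity

lemma legP_nonneg {ν : ℝ} (hν : ν^2 ≤ 1/4) (k : ℕ) : 0 ≤ legP ν k :=
  Finset.prod_nonneg fun i _ => by
    nlinarith [Nat.cast_nonneg (α := ℝ) i]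

lemma legP_le_legA {ν : ℝ} (hν : ν^2 ≤ 1/4) (k : ℕ) : legP ν k ≤ legA k :=
  Finset.prod_le_prod (fun i _ => by
      nlinarith [Nat.cast_nonneg (α := ℝ) i])
    (fun i _ => by nlinarith [sq_nonneg ν])

lemma diff_key {ν : ℝ} (hν : ν^2 ≤ 1/4) (k : ℕ) :
    ((k:ℝ)+1) * (legA k - legP ν k) ≤ 2 * k * ν^2 * legA k := by
  induction k with
  | zero => simp [legA, legP]
  | succ n ih =>
    have hPn := legP_nonneg hν n
    have hPA := legP_le_legA hν n
    have hAn := (legA_pos n).le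
    have hν0 := sq_nonneg ν
    have hm : (0:ℝ) ≤ (n:ℝ) := Nat.cast_nonneg n
    rw [legA, legP, Finset.prod_range_succ, Finset.prod_range_succ]
    push_cast
    rw [← legA, ← legP]
    nlinarith [mul_le_mul_of_nonneg_left ih (by positivity : (0:ℝ) ≤ ((n:ℝ)+1)*((n:ℝ)+2)),
      mul_le_mul_of_nonneg_left hPA (by positivity : (0:ℝ) ≤ ((n:ℝ)+2)*ν^2),
      mul_nonneg (mul_nonneg hν0 hAn) hm]

lemma diff_le {ν : ℝ} (hν : ν^2 ≤ 1/4) (k : ℕ) :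
    legA k - legP ν k ≤ 2 * ν^2 * legA k := by
  have h := diff_key hν k
  have hk : (0:ℝ) < (k:ℝ)+1 := by positivity
  have hAk := (legA_pos k).le
  nlinarith [mul_nonneg (sq_nonneg ν) hAk]

lemma coeff_eq (ν : ℝ) (k : ℕ) :
    (∏ i ∈ Finset.range (k+1), (-ν + (i:ℝ))) * (∏ i ∈ Finset.range (k+1), (ν + 1 + (i:ℝ)))
      = -ν * (ν + ((k:ℝ)+1)) * legP ν k := by
  have h1 : (∏ i ∈ Finset.range (k+1), (-ν + (i:ℝ)))
      = (∏ i ∈ Finset.range k, (-ν + ((i:ℝ)+1))) * (-ν) := by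
    rw [Finset.prod_range_succ']
    push_cast
    norm_num
  have h2 : (∏ i ∈ Finset.range (k+1), (ν + 1 + (i:ℝ)))
      = (∏ i ∈ Finset.range k, (ν + 1 + (i:ℝ))) * (ν + 1 + k) := Finset.prod_range_succ _ _
  have h3 : (∏ i ∈ Finset.range k, (-ν + ((i:ℝ)+1))) * (∏ i ∈ Finset.range k, (ν + 1 + (i:ℝ)))
      = legP ν k := by
    rw [legP, ← Finset.prod_mul_distrib]
    exact Finset.prod_congr rfl fun i _ => by ring
  calc (∏ i ∈ Finset.range (k+1), (-ν + (i:ℝ))) * (∏ i ∈ Finset.range (k+1), (ν + 1 + (i:ℝ)))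
      = ((∏ i ∈ Finset.range k, (-ν + ((i:ℝ)+1))) * (∏ i ∈ Finset.range k, (ν + 1 + (i:ℝ))))
        * ((-ν) * (ν + 1 + k)) := by rw [h1, h2]; ring
    _ = -ν * (ν + ((k:ℝ)+1)) * legP ν k := by rw [h3]; ring

lemma legendre_main {x : ℝ} (hx0 : 0 < x) (hx1 : x < 1) :
    (fun ν : ℝ => F ν x - (1 + ν * Real.log (1 - x) - ν ^ 2 * Li2 x))
      =O[nhds 0] (fun ν : ℝ => ν ^ 3) := by
  have hxabs : |x| < 1 := abs_lt.2 ⟨by linarith, hx1⟩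
  have hgeo : Summable (fun k : ℕ => x ^ (k+1)) := by
    simpa [pow_succ] using (summable_geometric_of_lt_one hx0.le hx1).mul_right x
  have h1x : (0:ℝ) < 1 - x := by linarith
  rw [Asymptotics.isBigO_iff]
  refine ⟨3 / (1 - x), ?_⟩
  filter_upwards [Metric.ball_mem_nhds (0:ℝ) (by norm_num : (0:ℝ) < 1/2)] with ν hmem
  have hν : |ν| ≤ 1/2 := by
    have := Metric.mem_ball.mp hmem
    rw [Real.dist_eq, sub_zero] at this
    linarith
  have hν2 : ν^2 ≤ 1/4 := by nlinarith [sq_abs ν, abs_nonneg ν]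
  set c : ℕ → ℝ := fun k => ((∏ i ∈ Finset.range k, (-ν + (i:ℝ)))
      * (∏ i ∈ Finset.range k, (ν + 1 + (i:ℝ))) / ((k.factorial : ℝ) ^ 2)) * x ^ k with hc
  have hFx : F ν x = ∑' k, c k := rfl
  have hc0 : c 0 = 1 := by simp [hc]
  have hfact : ∀ k : ℕ, (((k+1).factorial : ℝ))^2 = (((k:ℝ)+1))^2 * ((k.factorial : ℝ))^2 := by
    intro k
    rw [Nat.factorial_succ]
    push_cast
    ring
  have hcsucc : ∀ k : ℕ, c (k+1)
      = (-ν * (ν + ((k:ℝ)+1))) * (legP ν k / ((((k:ℝ)+1))^2 * legA k) * x^(k+1)) := by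
    intro k
    rw [hc]
    simp only
    rw [coeff_eq ν k, hfact k, legA_eq]
    ring
  -- bounds on |c (k+1)|
  have hb1 : ∀ k : ℕ, |(-ν * (ν + ((k:ℝ)+1)))| ≤ 1/2 * (((k:ℝ)+1) + 1/2) := by
    intro k
    rw [abs_mul, abs_neg]
    have hk0 : (0:ℝ) ≤ (k:ℝ)+1 := by positivity
    have h2 : |ν + ((k:ℝ)+1)| ≤ ((k:ℝ)+1) + 1/2 := by
      have := abs_add_le ν ((k:ℝ)+1)
      rw [abs_of_nonneg hk0] at this
      linarith
    exact mul_le_mul hν h2 (abs_nonneg _) (by norm_num)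
  have habs_c : ∀ k : ℕ, |c (k+1)| ≤ x^(k+1) := by
    intro k
    have hApos := legA_pos k
    have hP0 := legP_nonneg hν2 k
    have hPA := legP_le_legA hν2 k
    have hk0 : (0:ℝ) ≤ (k:ℝ) := Nat.cast_nonneg k
    have hxp : (0:ℝ) ≤ x^(k+1) := by positivity
    rw [hcsucc k, abs_mul, abs_of_nonneg (by positivity : (0:ℝ) ≤ legP ν k / ((((k:ℝ)+1))^2 * legA k) * x^(k+1))]
    have h3 : legP ν k / ((((k:ℝ)+1))^2 * legA k) ≤ 1 / (((k:ℝ)+1))^2 := by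
      rw [div_le_div_iff₀ (by positivity) (by positivity)]
      nlinarith
    calc |(-ν * (ν + ((k:ℝ)+1)))| * (legP ν k / ((((k:ℝ)+1))^2 * legA k) * x^(k+1))
        ≤ (1/2 * (((k:ℝ)+1) + 1/2)) * (1 / (((k:ℝ)+1))^2 * x^(k+1)) := by
          apply mul_le_mul (hb1 k) (mul_le_mul_of_nonneg_right h3 hxp)
            (by positivity) (by positivity)
      _ = (1/2 * (((k:ℝ)+1) + 1/2) / (((k:ℝ)+1))^2) * x^(k+1) := by ring
      _ ≤ 1 * x^(k+1) := by
          apply mul_le_mul_of_nonneg_right _ hxp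
          rw [div_le_one (by positivity)]
          nlinarith
      _ = x^(k+1) := one_mul _
  have hsum_c1 : Summable (fun k => c (k+1)) :=
    Summable.of_norm_bounded hgeo (fun k => by
      rw [Real.norm_eq_abs]; exact habs_c k)
  have hsum_c : Summable c := (summable_nat_add_iff 1).mp hsum_c1
  -- log and Li2 series
  have hlog := Real.hasSum_pow_div_log_of_abs_lt_one hxabs
  have hlog_sum : Summable (fun k : ℕ => x^(k+1)/((k:ℝ)+1)) := hlog.summable
  have hlogeq : Real.log (1-x) = -∑' k : ℕ, x^(k+1)/((k:ℝ)+1) := by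
    rw [hlog.tsum_eq, neg_neg]
  have hLi2_sum : Summable (fun k : ℕ => x^(k+1)/(((k:ℝ)+1)^2)) := by
    apply Summable.of_nonneg_of_le (fun k => by positivity) (fun k => ?_) hgeo
    exact div_le_self (by positivity) (by nlinarith [Nat.cast_nonneg (α := ℝ) k])
  -- the combined error term
  set e := (fun k : ℕ => c (k+1) + ν * (x^(k+1)/((k:ℝ)+1)) + ν^2 * (x^(k+1)/(((k:ℝ)+1)^2)))
    with he
  have heq : ∀ k : ℕ, e k = (ν * (ν + ((k:ℝ)+1)))
      * ((legA k - legP ν k) / ((((k:ℝ)+1))^2 * legA k) * x^(k+1)) := by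
    intro k
    rw [he]
    simp only
    rw [hcsucc k]
    have hApos := legA_pos k
    have hk1 : ((k:ℝ)+1) ≠ 0 := by positivity
    field_simp
    ring
  have habs_e : ∀ k : ℕ, |e k| ≤ (3 * |ν|^3) * x^(k+1) := by
    intro k
    have hApos := legA_pos k
    have hPA := legP_le_legA hν2 k
    have hk0 : (0:ℝ) ≤ (k:ℝ) := Nat.cast_nonneg k
    have hxp : (0:ℝ) ≤ x^(k+1) := by positivity
    have hdiff := diff_le hν2 k
    have hd0 : (0:ℝ) ≤ legA k - legP ν k := by linarith
    rw [heq k, abs_mul,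
      abs_of_nonneg (by positivity : (0:ℝ) ≤ (legA k - legP ν k) / ((((k:ℝ)+1))^2 * legA k) * x^(k+1))]
    have hb1' : |ν * (ν + ((k:ℝ)+1))| ≤ |ν| * (((k:ℝ)+1) + 1/2) := by
      rw [abs_mul]
      apply mul_le_mul_of_nonneg_left _ (abs_nonneg ν)
      have := abs_add_le ν ((k:ℝ)+1)
      rw [abs_of_nonneg (by positivity : (0:ℝ) ≤ (k:ℝ)+1)] at this
      linarith
    have h2 : (legA k - legP ν k) / ((((k:ℝ)+1))^2 * legA k) ≤ 2*ν^2 / (((k:ℝ)+1))^2 := by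
      rw [div_le_div_iff₀ (by positivity) (by positivity)]
      nlinarith [mul_le_mul_of_nonneg_right hdiff (sq_nonneg ((k:ℝ)+1))]
    have hc2 : (((k:ℝ)+1) + 1/2) / (((k:ℝ)+1))^2 ≤ 3/2 := by
      rw [div_le_iff₀ (by positivity)]
      nlinarith
    calc |ν * (ν + ((k:ℝ)+1))| * ((legA k - legP ν k) / ((((k:ℝ)+1))^2 * legA k) * x^(k+1))
        ≤ (|ν| * (((k:ℝ)+1) + 1/2)) * (2*ν^2 / (((k:ℝ)+1))^2 * x^(k+1)) := by
          apply mul_le_mul hb1' (mul_le_mul_of_nonneg_right _ hxp) (by positivity) (by positivity)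
          exact h2
      _ = (2 * |ν| * ν^2 * x^(k+1)) * ((((k:ℝ)+1) + 1/2) / (((k:ℝ)+1))^2) := by ring
      _ ≤ (2 * |ν| * ν^2 * x^(k+1)) * (3/2) := by
          apply mul_le_mul_of_nonneg_left hc2 (by positivity)
      _ = (3 * |ν|^3) * x^(k+1) := by rw [← sq_abs ν]; ring
  have hsum_bound : Summable (fun k : ℕ => (3 * |ν|^3) * x^(k+1)) := hgeo.mul_left _
  have hsum_e : Summable e := by
    rw [he]
    exact (hsum_c1.add (hlog_sum.mul_left ν)).add (hLi2_sum.mul_left (ν^2))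
  have hsum_e_norm : Summable (fun k => ‖e k‖) := by
    apply Summable.of_nonneg_of_le (fun k => norm_nonneg _) (fun k => ?_) hsum_bound
    rw [Real.norm_eq_abs]; exact habs_e k
  -- main identity
  have hkey : F ν x - (1 + ν * Real.log (1-x) - ν^2 * Li2 x) = ∑' k, e k := by
    rw [hFx, Summable.tsum_eq_zero_add hsum_c, hc0, hlogeq]
    have h1 : ∑' k : ℕ, ν * (x^(k+1)/((k:ℝ)+1)) = ν * ∑' k : ℕ, x^(k+1)/((k:ℝ)+1) :=
      tsum_mul_left
    have h2 : ∑' k : ℕ, ν^2 * (x^(k+1)/(((k:ℝ)+1)^2)) = ν^2 * ∑' k : ℕ, x^(k+1)/(((k:ℝ)+1)^2) :=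
      tsum_mul_left
    have h3 : ∑' k, e k = (∑' k, c (k+1)) + (∑' k : ℕ, ν * (x^(k+1)/((k:ℝ)+1)))
        + (∑' k : ℕ, ν^2 * (x^(k+1)/(((k:ℝ)+1)^2))) := by
      rw [← Summable.tsum_add hsum_c1 (hlog_sum.mul_left ν),
        ← Summable.tsum_add (hsum_c1.add (hlog_sum.mul_left ν)) (hLi2_sum.mul_left (ν^2))]
    rw [h3, h1, h2, Li2]
    ring
  rw [hkey]
  have hnorm1 : ‖∑' k, e k‖ ≤ ∑' k : ℕ, (3 * |ν|^3) * x^(k+1) := by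
    calc ‖∑' k, e k‖ ≤ ∑' k, ‖e k‖ := norm_tsum_le_tsum_norm hsum_e_norm
      _ ≤ ∑' k : ℕ, (3 * |ν|^3) * x^(k+1) := by
          apply Summable.tsum_le_tsum _ hsum_e_norm hsum_bound
          intro k
          rw [Real.norm_eq_abs]; exact habs_e k
  have hgeosum : ∑' k : ℕ, x^(k+1) = x * (1-x)⁻¹ := by
    have : ∀ k : ℕ, x^(k+1) = x^k * x := fun k => pow_succ x k
    rw [tsum_congr this, tsum_mul_right, tsum_geometric_of_lt_one hx0.le hx1]
    ring
  have hsum_eval : ∑' k : ℕ, (3 * |ν|^3) * x^(k+1) = (3 * |ν|^3) * (x * (1-x)⁻¹) := by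
    rw [tsum_mul_left, hgeosum]
  calc ‖∑' k, e k‖ ≤ (3 * |ν|^3) * (x * (1-x)⁻¹) := by rw [← hsum_eval]; exact hnorm1
    _ ≤ (3 * |ν|^3) * (1-x)⁻¹ := by
        apply mul_le_mul_of_nonneg_left _ (by positivity)
        exact mul_le_of_le_one_left (inv_pos.2 h1x).le hx1.le
    _ = 3 / (1-x) * ‖ν^3‖ := by
        rw [Real.norm_eq_abs, abs_pow]
        ring
  done

theorem legendre_maclaurin (z : ℝ) (hz : |z| < 1) :
    (fun ν : ℝ => F ν ((1 - z) / 2)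
        - (1 + ν * Real.log ((z + 1) / 2) - ν ^ 2 * Li2 ((1 - z) / 2)))
      =O[nhds 0] (fun ν : ℝ => ν ^ 3) := by
  obtain ⟨hz1, hz2⟩ := abs_lt.mp hz
  have hx0 : 0 < (1 - z) / 2 := by linarith
  have hx1 : (1 - z) / 2 < 1 := by linarith
  have h := legendre_main hx0 hx1
  have harg : 1 - (1 - z) / 2 = (z + 1) / 2 := by ring
  rw [harg] at h
  exact h
end

section
/- For |x| < 1, [∂²/∂ν² ₂F₁(-ν, ν+1; 1; x)]_{ν=0} = -4·∑_{k≥1} x^k/k² · (1/2) = -2·Li₂(x). -/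
open Real Filter Set

namespace SecondDerivAux

open Polynomial Finset

noncomputable def P (k : ℕ) : ℝ[X] := ∏ i ∈ range k, (C (i:ℝ) - X)
noncomputable def Q (k : ℕ) : ℝ[X] := ∏ i ∈ range k, (X + C ((i:ℝ)+1))
noncomputable def W (k : ℕ) : ℝ[X] := P k * Q k
noncomputable def Pp (m : ℕ) : ℝ[X] := ∏ i ∈ range m, (C ((i:ℝ)+1) - X)
noncomputable def H (m : ℕ) : ℝ := ∑ i ∈ range m, 1/((i:ℝ)+1)

lemma H_succ (m : ℕ) : H (m+1) = H m + 1/((m:ℝ)+1) := by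
  simp [H, Finset.sum_range_succ]

lemma cXC0 (a : ℝ) : (X + C a).coeff 0 = a := by simp
lemma cXC1 (a : ℝ) : (X + C a).coeff 1 = 1 := by simp
lemma cCX0 (a : ℝ) : (C a - X).coeff 0 = a := by simp
lemma cCX1 (a : ℝ) : (C a - X).coeff 1 = -1 := by simp

/-! ### coefficient computations -/

lemma coeff_mul_one' (p q : ℝ[X]) :
    (p*q).coeff 1 = p.coeff 0 * q.coeff 1 + p.coeff 1 * q.coeff 0 := by
  rw [Polynomial.coeff_mul, Finset.Nat.sum_antidiagonal_eq_sum_range_succ_mk]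
  simp [Finset.sum_range_succ]

lemma coeff_mul_two' (p q : ℝ[X]) :
    (p*q).coeff 2 = p.coeff 0 * q.coeff 2 + p.coeff 1 * q.coeff 1 + p.coeff 2 * q.coeff 0 := by
  rw [Polynomial.coeff_mul, Finset.Nat.sum_antidiagonal_eq_sum_range_succ_mk]
  simp [Finset.sum_range_succ]
  try ring

lemma hq0 (k : ℕ) : (Q k).coeff 0 = (k.factorial : ℝ) := by
  induction k with
  | zero => simp [Q]
  | succ k ih =>
    rw [Q, Finset.prod_range_succ, ← Q, Polynomial.mul_coeff_zero, ih, cXC0]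
    push_cast [Nat.factorial_succ]
    ring

lemma hq1 (k : ℕ) : (Q k).coeff 1 = (k.factorial : ℝ) * H k := by
  induction k with
  | zero => simp [Q, H, Polynomial.coeff_one]
  | succ k ih =>
    rw [Q, Finset.prod_range_succ, ← Q, coeff_mul_one', ih, hq0, cXC0, cXC1, H_succ]
    have h1 : ((k:ℝ)+1) ≠ 0 := by positivity
    push_cast [Nat.factorial_succ]
    field_simp
    ring

lemma hp0 (m : ℕ) : (Pp m).coeff 0 = (m.factorial : ℝ) := by
  induction m with
  | zero => simp [Pp]
  | succ m ih =>
    rw [Pp, Finset.prod_range_succ, ← Pp, Polynomial.mul_coeff_zero, ih, cCX0]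
    push_cast [Nat.factorial_succ]
    ring

lemma hp1 (m : ℕ) : (Pp m).coeff 1 = -((m.factorial : ℝ) * H m) := by
  induction m with
  | zero => simp [Pp, H, Polynomial.coeff_one]
  | succ m ih =>
    rw [Pp, Finset.prod_range_succ, ← Pp, coeff_mul_one', ih, hp0, cCX0, cCX1, H_succ]
    have h1 : ((m:ℝ)+1) ≠ 0 := by positivity
    push_cast [Nat.factorial_succ]
    field_simp
    ring

lemma hP (m : ℕ) : P (m+1) = Pp m * (-X) := by
  rw [P, Finset.prod_range_succ']
  congr 1
  · rw [Pp]
    refine Finset.prod_congr rfl fun i _ => ?_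
    push_cast
    ring
  · simp

lemma hPc0 (m : ℕ) : (P (m+1)).coeff 0 = 0 := by
  rw [hP, Polynomial.mul_coeff_zero]; simp

lemma hPc1 (m : ℕ) : (P (m+1)).coeff 1 = -(m.factorial : ℝ) := by
  rw [hP, mul_neg, Polynomial.coeff_neg]
  have h : (Pp m * X).coeff 1 = (Pp m).coeff 0 := Polynomial.coeff_mul_X (Pp m) 0
  rw [h, hp0]

lemma hPc2 (m : ℕ) : (P (m+1)).coeff 2 = (m.factorial : ℝ) * H m := by
  rw [hP, mul_neg, Polynomial.coeff_neg]
  have h : (Pp m * X).coeff 2 = (Pp m).coeff 1 := Polynomial.coeff_mul_X (Pp m) 1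
  rw [h, hp1]
  ring

lemma hW2 (m : ℕ) :
    (W (m+1)).coeff 2 = -((m.factorial : ℝ) * ((m+1).factorial : ℝ) / ((m:ℝ)+1)) := by
  rw [W, coeff_mul_two', hPc0, hPc1, hPc2, hq0, hq1, H_succ]
  have h1 : ((m:ℝ)+1) ≠ 0 := by positivity
  field_simp
  ring

lemma hc2 (m : ℕ) :
    (W (m+1)).derivative.derivative.eval 0 / (((m+1).factorial : ℝ))^2
      = -2/((m:ℝ)+1)^2 := by
  rw [← Polynomial.coeff_zero_eq_eval_zero, Polynomial.coeff_derivative,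
    Polynomial.coeff_derivative]
  norm_num
  rw [hW2]
  have h1 : ((m:ℝ)+1) ≠ 0 := by positivity
  have h2 : (m.factorial : ℝ) ≠ 0 := by positivity
  have h3 : (((m+1).factorial : ℝ)) = ((m:ℝ)+1) * (m.factorial : ℝ) := by
    push_cast [Nat.factorial_succ]; ring
  rw [h3]
  field_simp

/-! ### ℓ¹ bounds on coefficients -/

noncomputable def Sb (N : ℕ) (R : ℝ[X]) : ℝ := ∑ j ∈ range N, |R.coeff j|

lemma Sb_nonneg (N : ℕ) (R : ℝ[X]) : 0 ≤ Sb N R :=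
  Finset.sum_nonneg fun _ _ => abs_nonneg _

lemma Sb_mono (R : ℝ[X]) {M N : ℕ} (h : M ≤ N) : Sb M R ≤ Sb N R :=
  Finset.sum_le_sum_of_subset_of_nonneg (Finset.range_subset_range.2 h)
    (fun _ _ _ => abs_nonneg _)

lemma Sb_add_le (N : ℕ) (p q : ℝ[X]) : Sb N (p + q) ≤ Sb N p + Sb N q := by
  rw [Sb, Sb, Sb, ← Finset.sum_add_distrib]
  exact Finset.sum_le_sum fun j _ => by rw [Polynomial.coeff_add]; exact abs_add_le _ _

lemma Sb_neg (N : ℕ) (p : ℝ[X]) : Sb N (-p) = Sb N p := by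
  simp [Sb]

lemma Sb_sub_le (N : ℕ) (p q : ℝ[X]) : Sb N (p - q) ≤ Sb N p + Sb N q := by
  rw [sub_eq_add_neg]
  exact (Sb_add_le N p (-q)).trans (by rw [Sb_neg])

lemma Sb_mulX (N : ℕ) (R : ℝ[X]) : Sb N (R * X) ≤ Sb N R := by
  cases N with
  | zero => simp [Sb]
  | succ M =>
    rw [Sb, Finset.sum_range_succ']
    have h0 : |(R * X).coeff 0| = 0 := by simp [Polynomial.mul_coeff_zero]
    rw [h0, add_zero]
    calc ∑ j ∈ range M, |(R * X).coeff (j+1)| = ∑ j ∈ range M, |R.coeff j| :=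
          Finset.sum_congr rfl fun j _ => by rw [Polynomial.coeff_mul_X]
      _ ≤ Sb (M+1) R := Sb_mono R (Nat.le_succ M)

lemma Sb_mulC (N : ℕ) (R : ℝ[X]) (a : ℝ) : Sb N (R * C a) = Sb N R * |a| := by
  simp [Sb, Polynomial.coeff_mul_C, abs_mul, ← Finset.sum_mul]

lemma Sb_mul_lin1 (N : ℕ) (R : ℝ[X]) (a : ℝ) :
    Sb N (R * (X + C a)) ≤ (1 + |a|) * Sb N R := by
  rw [mul_add]
  have h1 := Sb_add_le N (R * X) (R * C a)
  have h2 := Sb_mulX N R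
  have h3 := Sb_mulC N R a
  nlinarith [Sb_nonneg N R, abs_nonneg a]

lemma Sb_mul_lin2 (N : ℕ) (R : ℝ[X]) (a : ℝ) :
    Sb N (R * (C a - X)) ≤ (|a| + 1) * Sb N R := by
  rw [mul_sub]
  have h1 := Sb_sub_le N (R * C a) (R * X)
  have h2 := Sb_mulX N R
  have h3 := Sb_mulC N R a
  nlinarith [Sb_nonneg N R, abs_nonneg a]

lemma Sb_one (N : ℕ) : Sb N 1 ≤ 1 := by
  have h : ∀ j : ℕ, |(1:ℝ[X]).coeff j| = if j = 0 then (1:ℝ) else 0 := fun j => by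
    rw [Polynomial.coeff_one]; split <;> simp
  rw [Sb, Finset.sum_congr rfl fun j _ => h j,
    Finset.sum_ite_eq' (range N) 0 (fun _ => (1:ℝ))]
  split <;> norm_num

lemma hWsucc (k : ℕ) :
    W (k+1) = (W k * (C (k:ℝ) - X)) * (X + C ((k:ℝ)+1)) := by
  rw [W, W, P, Q, Finset.prod_range_succ, Finset.prod_range_succ, ← P, ← Q]
  ring

lemma SbW_le (k : ℕ) : ∀ N, Sb N (W k) ≤ (k.factorial : ℝ) * ((k+1).factorial : ℝ) := by
  induction k with
  | zero =>
    intro N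
    have h : W 0 = 1 := by simp [W, P, Q]
    rw [h]
    simpa using Sb_one N
  | succ k ih =>
    intro N
    rw [hWsucc]
    have e1 := Sb_mul_lin1 N (W k * (C (k:ℝ) - X)) ((k:ℝ)+1)
    have e2 := Sb_mul_lin2 N (W k) (k:ℝ)
    have e3 := ih N
    have hk0 : (0:ℝ) ≤ (k:ℝ) := Nat.cast_nonneg k
    rw [abs_of_nonneg (by positivity : (0:ℝ) ≤ (k:ℝ)+1)] at e1
    rw [abs_of_nonneg hk0] at e2
    have hfin : ((k+1).factorial : ℝ) * (((k+1)+1).factorial : ℝ)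
        = (1+((k:ℝ)+1)) * (((k:ℝ)+1) * ((k.factorial : ℝ) * ((k+1).factorial : ℝ))) := by
      push_cast [Nat.factorial_succ]
      ring
    rw [hfin]
    have hnn1 : 0 ≤ Sb N (W k * (C (k:ℝ) - X)) := Sb_nonneg _ _
    have hnn2 : 0 ≤ Sb N (W k) := Sb_nonneg _ _
    calc Sb N (W k * (C (k:ℝ) - X) * (X + C ((k:ℝ)+1)))
        ≤ (1+((k:ℝ)+1)) * Sb N (W k * (C (k:ℝ) - X)) := e1
      _ ≤ (1+((k:ℝ)+1)) * (((k:ℝ)+1) * Sb N (W k)) :=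
          mul_le_mul_of_nonneg_left e2 (by positivity)
      _ ≤ (1+((k:ℝ)+1)) * (((k:ℝ)+1) * ((k.factorial : ℝ) * ((k+1).factorial : ℝ))) := by
          refine mul_le_mul_of_nonneg_left ?_ (by positivity)
          exact mul_le_mul_of_nonneg_left e3 (by positivity)

lemma ndW (k : ℕ) : (W k).natDegree ≤ 2*k := by
  have hP' : (P k).natDegree ≤ k := by
    refine (Polynomial.natDegree_prod_le _ _).trans ?_
    calc ∑ i ∈ range k, (C (i:ℝ) - X).natDegree ≤ ∑ _i ∈ range k, 1 := by
          refine Finset.sum_le_sum fun i _ => ?_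
          have h : C (i:ℝ) - X = -(X - C (i:ℝ)) := by ring
          rw [h, Polynomial.natDegree_neg, Polynomial.natDegree_X_sub_C]
      _ = k := by simp
  have hQ' : (Q k).natDegree ≤ k := by
    refine (Polynomial.natDegree_prod_le _ _).trans ?_
    calc ∑ i ∈ range k, (X + C ((i:ℝ)+1)).natDegree ≤ ∑ _i ∈ range k, 1 := by
          refine Finset.sum_le_sum fun i _ => ?_
          rw [Polynomial.natDegree_X_add_C]
      _ = k := by simp
  have hm : (W k).natDegree ≤ (P k).natDegree + (Q k).natDegree := by
    rw [W]; exact Polynomial.natDegree_mul_le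
  omega

lemma abs_eval_le {R : ℝ[X]} {N : ℕ} (hN : R.natDegree < N) {t : ℝ} (ht : |t| ≤ 1) :
    |R.eval t| ≤ Sb N R := by
  rw [Polynomial.eval_eq_sum_range' hN]
  refine (Finset.abs_sum_le_sum_abs _ _).trans ?_
  refine Finset.sum_le_sum fun j _ => ?_
  rw [abs_mul, abs_pow]
  calc |R.coeff j| * |t|^j ≤ |R.coeff j| * 1 := by
        gcongr
        exact pow_le_one₀ (abs_nonneg t) ht
    _ = |R.coeff j| := mul_one _

lemma Sb_deriv_le (N : ℕ) (R : ℝ[X]) : Sb N (derivative R) ≤ N * Sb (N+1) R := by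
  have h1 : Sb N (derivative R) ≤ (N:ℝ) * ∑ j ∈ range N, |R.coeff (j+1)| := by
    rw [Sb, Finset.mul_sum]
    refine Finset.sum_le_sum fun j hj => ?_
    rw [Polynomial.coeff_derivative, abs_mul,
      abs_of_nonneg (show (0:ℝ) ≤ (j:ℝ)+1 by positivity)]
    have hj' : (j:ℝ)+1 ≤ (N:ℝ) := by
      exact_mod_cast Nat.succ_le_of_lt (Finset.mem_range.1 hj)
    calc |R.coeff (j+1)| * ((j:ℝ)+1) ≤ |R.coeff (j+1)| * (N:ℝ) := by gcongr
      _ = (N:ℝ) * |R.coeff (j+1)| := mul_comm _ _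
  have h2 : ∑ j ∈ range N, |R.coeff (j+1)| ≤ Sb (N+1) R := by
    rw [Sb, Finset.sum_range_succ']
    have := abs_nonneg (R.coeff 0)
    linarith
  exact h1.trans (mul_le_mul_of_nonneg_left h2 (Nat.cast_nonneg N))

lemma bW0 (k : ℕ) {t : ℝ} (ht : |t| ≤ 1) :
    |(W k).eval t| ≤ (k.factorial : ℝ) * ((k+1).factorial : ℝ) := by
  have hnd : (W k).natDegree < 2*k+1 := by have := ndW k; omega
  exact (abs_eval_le hnd ht).trans (SbW_le k (2*k+1))

lemma bW1 (k : ℕ) {t : ℝ} (ht : |t| ≤ 1) :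
    |(W k).derivative.eval t| ≤ (2*(k:ℝ)+1) * ((k.factorial : ℝ) * ((k+1).factorial : ℝ)) := by
  have hnd : (W k).derivative.natDegree < 2*k+1 := by
    have h1 : (W k).derivative.natDegree ≤ (W k).natDegree :=
      (Polynomial.natDegree_derivative_le _).trans (Nat.sub_le _ _)
    have := ndW k; omega
  refine (abs_eval_le hnd ht).trans ?_
  refine (Sb_deriv_le (2*k+1) (W k)).trans ?_
  have h2 := SbW_le k (2*k+1+1)
  calc ((2*k+1 : ℕ):ℝ) * Sb (2*k+1+1) (W k)
      ≤ ((2*k+1 : ℕ):ℝ) * ((k.factorial : ℝ) * ((k+1).factorial : ℝ)) :=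
        mul_le_mul_of_nonneg_left h2 (Nat.cast_nonneg _)
    _ = (2*(k:ℝ)+1) * ((k.factorial : ℝ) * ((k+1).factorial : ℝ)) := by push_cast; ring

lemma bW2 (k : ℕ) {t : ℝ} (ht : |t| ≤ 1) :
    |(W k).derivative.derivative.eval t|
      ≤ (2*(k:ℝ)+1) * (2*(k:ℝ)+2) * ((k.factorial : ℝ) * ((k+1).factorial : ℝ)) := by
  have hnd : (W k).derivative.derivative.natDegree < 2*k+1 := by
    have h1 : (W k).derivative.derivative.natDegree ≤ (W k).natDegree :=
      ((Polynomial.natDegree_derivative_le _).trans (Nat.sub_le _ _)).trans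
        ((Polynomial.natDegree_derivative_le _).trans (Nat.sub_le _ _))
    have := ndW k; omega
  refine (abs_eval_le hnd ht).trans ?_
  refine (Sb_deriv_le (2*k+1) (W k).derivative).trans ?_
  have e : 2*k+1+1 = 2*k+2 := by omega
  rw [e]
  have h2 : Sb (2*k+2) (W k).derivative ≤ ((2*k+2 : ℕ):ℝ) * Sb (2*k+2+1) (W k) :=
    Sb_deriv_le (2*k+2) (W k)
  have h3 := SbW_le k (2*k+2+1)
  calc ((2*k+1 : ℕ):ℝ) * Sb (2*k+2) (W k).derivative
      ≤ ((2*k+1 : ℕ):ℝ) * (((2*k+2 : ℕ):ℝ) * ((k.factorial : ℝ) * ((k+1).factorial : ℝ))) := by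
        refine mul_le_mul_of_nonneg_left (h2.trans ?_) (Nat.cast_nonneg _)
        exact mul_le_mul_of_nonneg_left h3 (Nat.cast_nonneg _)
    _ = (2*(k:ℝ)+1) * (2*(k:ℝ)+2) * ((k.factorial : ℝ) * ((k+1).factorial : ℝ)) := by
        push_cast; ring

/-! ### the three stages of the series -/

noncomputable def g (x : ℝ) (k : ℕ) (t : ℝ) : ℝ :=
  (W k).eval t / ((k.factorial : ℝ))^2 * x ^ k

noncomputable def g1 (x : ℝ) (k : ℕ) (t : ℝ) : ℝ :=
  (W k).derivative.eval t / ((k.factorial : ℝ))^2 * x ^ k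

noncomputable def g2 (x : ℝ) (k : ℕ) (t : ℝ) : ℝ :=
  (W k).derivative.derivative.eval t / ((k.factorial : ℝ))^2 * x ^ k

noncomputable def u (x : ℝ) (k : ℕ) : ℝ := 27 * ((k:ℝ)+1)^3 * |x| ^ k

lemma key_div (k : ℕ) (A B : ℝ) (hB : 0 ≤ B)
    (h : |A| ≤ B * ((k.factorial : ℝ) * ((k+1).factorial : ℝ))) :
    |A| / ((k.factorial : ℝ))^2 ≤ B * ((k:ℝ)+1) := by
  have hf : (0:ℝ) < ((k.factorial : ℝ))^2 := by positivity
  rw [div_le_iff₀ hf]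
  have he : B * ((k.factorial : ℝ) * ((k+1).factorial : ℝ))
      = B * ((k:ℝ)+1) * ((k.factorial : ℝ))^2 := by
    rw [show (((k+1).factorial : ℝ)) = ((k:ℝ)+1) * (k.factorial : ℝ) by
      push_cast [Nat.factorial_succ]; ring]
    ring
  linarith [he ▸ h]

lemma norm_g_aux (x : ℝ) (k : ℕ) (E : ℝ[X]) (t : ℝ) (B : ℝ) (hB : 0 ≤ B)
    (hE : |E.eval t| ≤ B * ((k.factorial : ℝ) * ((k+1).factorial : ℝ)))
    (hB' : B * ((k:ℝ)+1) ≤ 27 * ((k:ℝ)+1)^3) :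
    ‖E.eval t / ((k.factorial : ℝ))^2 * x ^ k‖ ≤ u x k := by
  rw [Real.norm_eq_abs, abs_mul, abs_div, abs_pow, abs_pow,
    abs_of_nonneg (show (0:ℝ) ≤ (k.factorial : ℝ) from Nat.cast_nonneg _)]
  have h1 := key_div k (E.eval t) B hB hE
  have hxk : (0:ℝ) ≤ |x|^k := by positivity
  calc |E.eval t| / ((k.factorial : ℝ))^2 * |x|^k ≤ (B * ((k:ℝ)+1)) * |x|^k :=
        mul_le_mul_of_nonneg_right h1 hxk
    _ ≤ 27 * ((k:ℝ)+1)^3 * |x|^k := mul_le_mul_of_nonneg_right hB' hxk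
    _ = u x k := rfl

lemma hb0 (x : ℝ) (k : ℕ) (t : ℝ) (ht : |t| ≤ 1) : ‖g x k t‖ ≤ u x k := by
  refine norm_g_aux x k (W k) t 1 zero_le_one (by rw [one_mul]; exact bW0 k ht) ?_
  nlinarith [sq_nonneg ((k:ℝ)+1), show (0:ℝ) ≤ (k:ℝ) from Nat.cast_nonneg k]

lemma hb1 (x : ℝ) (k : ℕ) (t : ℝ) (ht : |t| ≤ 1) : ‖g1 x k t‖ ≤ u x k := by
  refine norm_g_aux x k (W k).derivative t (2*(k:ℝ)+1) (by positivity) (bW1 k ht) ?_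
  nlinarith [sq_nonneg ((k:ℝ)+1), show (0:ℝ) ≤ (k:ℝ) from Nat.cast_nonneg k]

lemma hb2 (x : ℝ) (k : ℕ) (t : ℝ) (ht : |t| ≤ 1) : ‖g2 x k t‖ ≤ u x k := by
  refine norm_g_aux x k (W k).derivative.derivative t ((2*(k:ℝ)+1) * (2*(k:ℝ)+2))
    (by positivity) (bW2 k ht) ?_
  nlinarith [sq_nonneg ((k:ℝ)+1), show (0:ℝ) ≤ (k:ℝ) from Nat.cast_nonneg k]

lemma hu_summable (x : ℝ) (hx : |x| < 1) : Summable (u x) := by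
  have hx' : ‖|x|‖ < 1 := by rwa [Real.norm_eq_abs, abs_abs]
  have h3 := summable_pow_mul_geometric_of_norm_lt_one 3 hx'
  have h2 := summable_pow_mul_geometric_of_norm_lt_one 2 hx'
  have h1 := summable_pow_mul_geometric_of_norm_lt_one 1 hx'
  have h0 := summable_pow_mul_geometric_of_norm_lt_one 0 hx'
  have hs : Summable (fun k : ℕ => ((k:ℝ)+1)^3 * |x| ^ k) := by
    refine (h3.add ((h2.mul_left 3).add ((h1.mul_left 3).add h0))).congr fun k => ?_
    push_cast
    ring
  exact (hs.mul_left 27).congr fun k => by rw [u]; ring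

lemma hd1 (x : ℝ) (k : ℕ) (t : ℝ) : HasDerivAt (g x k) (g1 x k t) t :=
  (((W k).hasDerivAt t).div_const _).mul_const _

lemma hd2 (x : ℝ) (k : ℕ) (t : ℝ) : HasDerivAt (g1 x k) (g2 x k t) t :=
  ((((W k).derivative).hasDerivAt t).div_const _).mul_const _

end SecondDerivAux

open SecondDerivAux Polynomial in
theorem second_nu_deriv_hyp (x : ℝ) (hx : |x| < 1) :
    iteratedDeriv 2 (fun ν : ℝ => F ν x) 0 = -2 * Li2 x := by
  classical
  have hu := hu_summable x hx
  have hball : IsOpen (Metric.ball (0:ℝ) 1) := Metric.isOpen_ball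
  have hpre : IsPreconnected (Metric.ball (0:ℝ) 1) := (convex_ball (0:ℝ) 1).isPreconnected
  have h0mem : (0:ℝ) ∈ Metric.ball (0:ℝ) 1 := Metric.mem_ball_self one_pos
  have habs : ∀ t : ℝ, t ∈ Metric.ball (0:ℝ) 1 → |t| ≤ 1 := by
    intro t ht
    rw [Metric.mem_ball, Real.dist_eq, sub_zero] at ht
    exact ht.le
  have hsum0 : Summable (fun k => g x k 0) :=
    Summable.of_norm_bounded hu fun k => hb0 x k 0 (by norm_num)
  have hsum1 : Summable (fun k => g1 x k 0) :=
    Summable.of_norm_bounded hu fun k => hb1 x k 0 (by norm_num)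
  have hsum2 : Summable (fun k => g2 x k 0) :=
    Summable.of_norm_bounded hu fun k => hb2 x k 0 (by norm_num)
  -- first derivative of the series on the ball
  have hA : ∀ ν ∈ Metric.ball (0:ℝ) 1,
      HasDerivAt (fun t => ∑' k, g x k t) (∑' k, g1 x k ν) ν := fun ν hν =>
    hasDerivAt_tsum_of_isPreconnected hu hball hpre
      (fun k y _ => hd1 x k y) (fun k y hy => hb1 x k y (habs y hy)) h0mem hsum0 hν
  -- second derivative of the series on the ball
  have hB : ∀ ν ∈ Metric.ball (0:ℝ) 1,
      HasDerivAt (fun t => ∑' k, g1 x k t) (∑' k, g2 x k ν) ν := fun ν hν =>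
    hasDerivAt_tsum_of_isPreconnected hu hball hpre
      (fun k y _ => hd2 x k y) (fun k y hy => hb2 x k y (habs y hy)) h0mem hsum1 hν
  -- the hypergeometric function equals the series built from polynomials
  have hFG : (fun ν : ℝ => F ν x) = fun ν => ∑' k, g x k ν := by
    funext ν
    rw [F]
    refine tsum_congr fun k => ?_
    have hPe : (∏ i ∈ Finset.range k, (-ν + (i:ℝ))) = (P k).eval ν := by
      rw [P, Polynomial.eval_prod]
      refine Finset.prod_congr rfl fun i _ => ?_
      simp only [Polynomial.eval_sub, Polynomial.eval_C, Polynomial.eval_X]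
      ring
    have hQe : (∏ i ∈ Finset.range k, (ν + 1 + (i:ℝ))) = (Q k).eval ν := by
      rw [Q, Polynomial.eval_prod]
      refine Finset.prod_congr rfl fun i _ => ?_
      simp only [Polynomial.eval_add, Polynomial.eval_C, Polynomial.eval_X]
      ring
    rw [hPe, hQe]
    simp only [g, W, Polynomial.eval_mul]
    try ring
  rw [hFG]
  -- reduce the iterated derivative to two successive derivatives
  have hit : iteratedDeriv 2 (fun ν => ∑' k, g x k ν) 0
      = deriv (deriv (fun ν => ∑' k, g x k ν)) 0 := by
    rw [iteratedDeriv_succ, iteratedDeriv_one]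
  rw [hit]
  -- the first derivative agrees with the termwise derivative near 0
  have hEq : deriv (fun ν => ∑' k, g x k ν) =ᶠ[nhds (0:ℝ)] (fun ν => ∑' k, g1 x k ν) := by
    filter_upwards [Metric.ball_mem_nhds (0:ℝ) one_pos] with ν hν
    exact (hA ν hν).deriv
  rw [hEq.deriv_eq, (hB 0 h0mem).deriv]
  -- evaluate the sum ∑ₖ g2 k 0
  rw [Summable.tsum_eq_zero_add hsum2]
  have hg20 : g2 x 0 0 = 0 := by
    have hW0 : W 0 = 1 := by simp [W, P, Q]
    simp [g2, hW0]
  have hterm : ∀ m : ℕ, g2 x (m+1) 0 = -2 * (x^(m+1) / ((m:ℝ)+1)^2) := by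
    intro m
    rw [g2, hc2 m]
    ring
  rw [hg20, zero_add]
  calc ∑' m, g2 x (m+1) 0 = ∑' m : ℕ, -2 * (x^(m+1) / ((m:ℝ)+1)^2) := tsum_congr hterm
    _ = -2 * ∑' m : ℕ, x^(m+1) / ((m:ℝ)+1)^2 := tsum_mul_left
    _ = -2 * Li2 x := by rw [Li2]
end

section
/- The coefficient of ν in the expansion of ₂F₁(-ν, ν+1; 1; x) in powers of ν equals ln(1-x) for |x| < 1; equivalently, [∂P_ν(z)/∂ν]_{ν=0} = ln((1+z)/2) with x = (1-z)/2. -/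
open Real Filter Set Topology

/-- Auxiliary: the factor of `-ν` in the `(k+1)`-st coefficient. -/
noncomputable def gaux (k : ℕ) (ν : ℝ) : ℝ :=
  (∏ i ∈ Finset.range k, (1 + (i : ℝ) - ν)) * (∏ i ∈ Finset.range (k + 1), (ν + 1 + i))
    / (((k + 1).factorial : ℝ) ^ 2)

lemma prod_add_two (n : ℕ) : (∏ i ∈ Finset.range n, ((i : ℝ) + 2)) = (n + 1).factorial := by
  induction n with
  | zero => simp
  | succ n ih =>
    rw [Finset.prod_range_succ, ih]
    push_cast [Nat.factorial_succ]
    ring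

lemma gaux_bound (k : ℕ) (ν : ℝ) (hν : |ν| ≤ 1 / 2) : |gaux k ν| ≤ (k : ℝ) + 2 := by
  have hν1 : -(1/2 : ℝ) ≤ ν := neg_le_of_abs_le hν
  have hν2 : ν ≤ (1/2 : ℝ) := le_of_abs_le hν
  have h1 : |∏ i ∈ Finset.range k, (1 + (i : ℝ) - ν)| ≤ ∏ i ∈ Finset.range k, ((i : ℝ) + 2) := by
    rw [Finset.abs_prod]
    refine Finset.prod_le_prod (fun i _ => abs_nonneg _) (fun i _ => ?_)
    have : (0 : ℝ) ≤ i := Nat.cast_nonneg i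
    rw [abs_le]; constructor <;> linarith
  have h2 : |∏ i ∈ Finset.range (k + 1), (ν + 1 + (i : ℝ))| ≤
      ∏ i ∈ Finset.range (k + 1), ((i : ℝ) + 2) := by
    rw [Finset.abs_prod]
    refine Finset.prod_le_prod (fun i _ => abs_nonneg _) (fun i _ => ?_)
    have : (0 : ℝ) ≤ i := Nat.cast_nonneg i
    rw [abs_le]; constructor <;> linarith
  have hfac : (0 : ℝ) < ((k + 1).factorial : ℝ) ^ 2 := by positivity
  rw [gaux, abs_div, abs_mul, abs_pow, Nat.abs_cast]
  rw [div_le_iff₀ hfac]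
  calc |∏ i ∈ Finset.range k, (1 + (i : ℝ) - ν)| * |∏ i ∈ Finset.range (k + 1), (ν + 1 + (i : ℝ))|
      ≤ (∏ i ∈ Finset.range k, ((i : ℝ) + 2)) * ∏ i ∈ Finset.range (k + 1), ((i : ℝ) + 2) :=
        mul_le_mul h1 h2 (abs_nonneg _) (Finset.prod_nonneg fun i _ => by positivity)
    _ = ((k + 1).factorial : ℝ) * ((k + 2).factorial : ℝ) := by
        rw [prod_add_two, prod_add_two]
    _ = ((k : ℝ) + 2) * ((k + 1).factorial : ℝ) ^ 2 := by
        have : (k + 2).factorial = (k + 2) * (k + 1).factorial := rfl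
        rw [this]; push_cast; ring

lemma summable_bound {x : ℝ} (hx : |x| < 1) :
    Summable (fun k : ℕ => ((k : ℝ) + 2) * |x| ^ (k + 1)) := by
  have h1 : Summable (fun k : ℕ => (k : ℝ) * |x| ^ k) := by
    simpa using summable_pow_mul_geometric_of_norm_lt_one (R := ℝ) 1 (by simpa using hx)
  have h2 : Summable (fun k : ℕ => (2 : ℝ) * |x| ^ k) :=
    (summable_geometric_of_lt_one (abs_nonneg x) hx).mul_left 2
  have h3 : Summable (fun k : ℕ => ((k : ℝ) + 2) * |x| ^ k) := by
    have := h1.add h2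
    refine this.congr fun k => by ring
  have := h3.mul_right |x|
  refine this.congr fun k => by ring

lemma term_bound {x : ℝ} (k : ℕ) (ν : ℝ) (hν : |ν| ≤ 1 / 2) :
    ‖gaux k ν * x ^ (k + 1)‖ ≤ ((k : ℝ) + 2) * |x| ^ (k + 1) := by
  rw [Real.norm_eq_abs, abs_mul, abs_pow]
  exact mul_le_mul_of_nonneg_right (gaux_bound k ν hν) (by positivity)

lemma summable_gaux {x : ℝ} (hx : |x| < 1) {ν : ℝ} (hν : |ν| ≤ 1 / 2) :
    Summable (fun k : ℕ => gaux k ν * x ^ (k + 1)) :=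
  (summable_bound hx).of_norm_bounded (fun k => term_bound k ν hν)

/-- `H ν = ∑' k, gaux k ν * x^(k+1)`. -/
noncomputable def Haux (x ν : ℝ) : ℝ := ∑' k : ℕ, gaux k ν * x ^ (k + 1)

lemma coeff_succ (n : ℕ) (ν x : ℝ) :
    ((∏ i ∈ Finset.range (n+1), (-ν + (i:ℝ))) * (∏ i ∈ Finset.range (n+1), (ν + 1 + (i:ℝ)))
      / (((n+1).factorial : ℝ) ^ 2)) * x ^ (n+1)
      = -ν * (gaux n ν * x ^ (n + 1)) := by
  have h : (∏ i ∈ Finset.range (n+1), (-ν + (i:ℝ)))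
      = (∏ i ∈ Finset.range n, (1 + (i : ℝ) - ν)) * (-ν) := by
    rw [Finset.prod_range_succ']
    congr 1
    · exact Finset.prod_congr rfl fun i _ => by push_cast; ring
    · norm_num
  rw [h, gaux]
  ring

lemma F_eq {x : ℝ} (hx : |x| < 1) {ν : ℝ} (hν : |ν| ≤ 1 / 2) :
    F ν x = 1 - ν * Haux x ν := by
  set f : ℕ → ℝ := fun k =>
    ((∏ i ∈ Finset.range k, (-ν + (i:ℝ))) * (∏ i ∈ Finset.range k, (ν + 1 + (i:ℝ)))
      / ((k.factorial : ℝ) ^ 2)) * x ^ k with hf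
  have hsucc : ∀ n, f (n + 1) = -ν * (gaux n ν * x ^ (n + 1)) := fun n => coeff_succ n ν x
  have hsummable : Summable f := by
    rw [← summable_nat_add_iff 1]
    refine ((summable_gaux hx hν).mul_left (-ν)).congr fun n => (hsucc n).symm
  have h0 : f 0 = 1 := by simp [hf]
  rw [F]
  rw [Summable.tsum_eq_zero_add hsummable, h0]
  have : ∑' (n : ℕ), f (n + 1) = -ν * Haux x ν := by
    rw [Haux, ← tsum_mul_left]
    exact tsum_congr hsucc
  rw [this]; ring

lemma Haux_continuousAt {x : ℝ} (hx : |x| < 1) :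
    ContinuousAt (Haux x) 0 := by
  have hcont : ContinuousOn (fun ν => Haux x ν) (Icc (-(1/2) : ℝ) (1/2)) := by
    unfold Haux
    apply continuousOn_tsum (f := fun (k : ℕ) (ν : ℝ) => gaux k ν * x ^ (k + 1))
      (u := fun k : ℕ => ((k : ℝ) + 2) * |x| ^ (k + 1))
    · intro k
      apply Continuous.continuousOn
      unfold gaux
      fun_prop
    · exact summable_bound hx
    · intro k ν hνmem
      exact term_bound k ν (abs_le.mpr ⟨hνmem.1, hνmem.2⟩)
  exact hcont.continuousAt (Icc_mem_nhds (by norm_num) (by norm_num))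

lemma Haux_zero {x : ℝ} (hx : |x| < 1) : Haux x 0 = -Real.log (1 - x) := by
  have hg : ∀ k : ℕ, gaux k 0 * x ^ (k + 1) = x ^ (k + 1) / ((k : ℝ) + 1) := by
    intro k
    have h1 : (∏ i ∈ Finset.range k, (1 + (i : ℝ) - 0)) = (k.factorial : ℝ) := by
      rw [← Finset.prod_range_add_one_eq_factorial k]
      push_cast
      exact Finset.prod_congr rfl fun i _ => by ring
    have h2 : (∏ i ∈ Finset.range (k+1), ((0:ℝ) + 1 + (i : ℝ))) = ((k+1).factorial : ℝ) := by
      rw [← Finset.prod_range_add_one_eq_factorial (k+1)]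
      push_cast
      exact Finset.prod_congr rfl fun i _ => by ring
    rw [gaux, h1, h2]
    have hfs : ((k+1).factorial : ℝ) = ((k:ℝ)+1) * (k.factorial : ℝ) := by
      rw [Nat.factorial_succ]; push_cast; ring
    rw [hfs]
    have hk : (k.factorial : ℝ) ≠ 0 := Nat.cast_ne_zero.mpr k.factorial_ne_zero
    have hk1 : ((k:ℝ)+1) ≠ 0 := by positivity
    field_simp
  rw [Haux]
  rw [tsum_congr hg]
  exact (hasSum_pow_div_log_of_abs_lt_one hx).tsum_eq

theorem first_nu_deriv_hyp (x : ℝ) (hx : |x| < 1) :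
    deriv (fun ν : ℝ => F ν x) 0 = Real.log (1 - x) := by
  have hd : HasDerivAt (fun ν : ℝ => F ν x) (-(Haux x 0)) 0 := by
    rw [hasDerivAt_iff_tendsto_slope]
    have hmem : Icc (-(1/2) : ℝ) (1/2) ∈ 𝓝 (0:ℝ) := Icc_mem_nhds (by norm_num) (by norm_num)
    have heq : (fun ν => -(Haux x ν)) =ᶠ[𝓝[≠] (0:ℝ)] slope (fun ν : ℝ => F ν x) 0 := by
      filter_upwards [nhdsWithin_le_nhds hmem, self_mem_nhdsWithin] with ν hν hν0
      have hνle : |ν| ≤ 1/2 := abs_le.mpr ⟨hν.1, hν.2⟩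
      have h0 : F 0 x = 1 - 0 * Haux x 0 := F_eq hx (by norm_num)
      rw [slope_def_field, F_eq hx hνle, h0]
      have : ν ≠ 0 := hν0
      field_simp
      ring
    have hcont : Tendsto (fun ν => -(Haux x ν)) (𝓝[≠] (0:ℝ)) (𝓝 (-(Haux x 0))) :=
      ((Haux_continuousAt hx).neg.tendsto).mono_left nhdsWithin_le_nhds
    exact hcont.congr' heq
  rw [hd.deriv, Haux_zero hx, neg_neg]
end

section
/- For -1 < z < 1, d/dz[12·Li₃((z+1)/2) - 6·ln((z+1)/2)·Li₂((z+1)/2) - π²·ln((z+1)/2)] = -6·Li₂((1-z)/2)/(1+z)·(1-z)·(1/(1-z)) = 6(z-1)·Li₂((1-z)/2)/(1-z²). -/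
open Real Filter Set

open Topology

lemma summable_aux {r : ℝ} (hr0 : 0 ≤ r) (hr1 : r < 1) (m : ℕ) :
    Summable (fun n : ℕ => r ^ n / ((n : ℝ) + 1) ^ m) := by
  apply Summable.of_nonneg_of_le (fun n => by positivity)
    (fun n => ?_) (summable_geometric_of_lt_one hr0 hr1)
  calc r ^ n / ((n : ℝ) + 1) ^ m ≤ r ^ n / 1 := by
        apply div_le_div_of_nonneg_left (by positivity) one_pos ?_ |>.trans_eq rfl
        exact one_le_pow₀ (by exact_mod_cast Nat.le_add_left 1 n)
    _ = r ^ n := div_one _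

lemma Li2_hasDerivAt {x : ℝ} (hx : |x| < 1) :
    HasDerivAt Li2 (∑' n : ℕ, x ^ n / ((n : ℝ) + 1)) x := by
  set r : ℝ := (1 + |x|) / 2 with hr
  have hxr : |x| < r := by rw [hr]; linarith
  have hr1 : r < 1 := by rw [hr]; linarith
  have hr0 : 0 < r := lt_of_le_of_lt (abs_nonneg x) hxr
  have := hasDerivAt_tsum_of_isPreconnected
    (u := fun n : ℕ => r ^ n)
    (g := fun (n : ℕ) (y : ℝ) => y ^ (n + 1) / ((n : ℝ) + 1) ^ 2)
    (g' := fun (n : ℕ) (y : ℝ) => y ^ n / ((n : ℝ) + 1))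
    (summable_geometric_of_lt_one hr0.le hr1) (Metric.isOpen_ball (x := (0:ℝ)) (ε := r))
    (convex_ball (0:ℝ) r).isPreconnected
    (fun n y _ => ?_) (fun n y hy => ?_) (y₀ := 0) ?_ ?_ (y := x) ?_
  · exact this
  · have h1 : HasDerivAt (fun y : ℝ => y ^ (n + 1)) ((n + 1 : ℕ) * y ^ n) y := by
      simpa using hasDerivAt_pow (n + 1) y
    have := h1.div_const (((n : ℝ) + 1) ^ 2)
    refine this.congr_deriv ?_
    push_cast
    field_simp
  · simp only [Metric.mem_ball, dist_zero_right, Real.norm_eq_abs] at hy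
    rw [Real.norm_eq_abs, abs_div, abs_pow, abs_of_pos (by positivity : (0:ℝ) < (n:ℝ)+1)]
    calc |y| ^ n / ((n : ℝ) + 1) ≤ |y| ^ n / 1 :=
          div_le_div_of_nonneg_left (by positivity) one_pos (by exact_mod_cast Nat.le_add_left 1 n)
      _ = |y| ^ n := div_one _
      _ ≤ r ^ n := pow_le_pow_left₀ (abs_nonneg y) hy.le n
  · simpa using hr0
  · simpa using summable_zero
  · simpa using hxr

lemma Li3_hasDerivAt {x : ℝ} (hx : |x| < 1) :
    HasDerivAt Li3 (∑' n : ℕ, x ^ n / ((n : ℝ) + 1) ^ 2) x := by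
  set r : ℝ := (1 + |x|) / 2 with hr
  have hxr : |x| < r := by rw [hr]; linarith
  have hr1 : r < 1 := by rw [hr]; linarith
  have hr0 : 0 < r := lt_of_le_of_lt (abs_nonneg x) hxr
  have := hasDerivAt_tsum_of_isPreconnected
    (u := fun n : ℕ => r ^ n)
    (g := fun (n : ℕ) (y : ℝ) => y ^ (n + 1) / ((n : ℝ) + 1) ^ 3)
    (g' := fun (n : ℕ) (y : ℝ) => y ^ n / ((n : ℝ) + 1) ^ 2)
    (summable_geometric_of_lt_one hr0.le hr1) (Metric.isOpen_ball (x := (0:ℝ)) (ε := r))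
    (convex_ball (0:ℝ) r).isPreconnected
    (fun n y _ => ?_) (fun n y hy => ?_) (y₀ := 0) ?_ ?_ (y := x) ?_
  · exact this
  · have h1 : HasDerivAt (fun y : ℝ => y ^ (n + 1)) ((n + 1 : ℕ) * y ^ n) y := by
      simpa using hasDerivAt_pow (n + 1) y
    have := h1.div_const (((n : ℝ) + 1) ^ 3)
    refine this.congr_deriv ?_
    push_cast
    field_simp
  · simp only [Metric.mem_ball, dist_zero_right, Real.norm_eq_abs] at hy
    rw [Real.norm_eq_abs, abs_div, abs_pow, abs_of_pos (by positivity : (0:ℝ) < ((n:ℝ)+1)^2)]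
    calc |y| ^ n / (((n : ℝ) + 1) ^ 2) ≤ |y| ^ n / 1 := by
          apply div_le_div_of_nonneg_left (by positivity) one_pos
          exact one_le_pow₀ (by exact_mod_cast Nat.le_add_left 1 n)
      _ = |y| ^ n := div_one _
      _ ≤ r ^ n := pow_le_pow_left₀ (abs_nonneg y) hy.le n
  · simpa using hr0
  · simpa using summable_zero
  · simpa using hxr

lemma Li2_hasDerivAt' {x : ℝ} (hx : |x| < 1) (hx0 : x ≠ 0) :
    HasDerivAt Li2 (-Real.log (1 - x) / x) x := by
  have h := Li2_hasDerivAt hx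
  convert h using 1
  have hs : HasSum (fun n : ℕ => x ^ (n + 1) / ((n : ℝ) + 1)) (-Real.log (1 - x)) :=
    Real.hasSum_pow_div_log_of_abs_lt_one hx
  have hs2 : HasSum (fun n : ℕ => x ^ n / ((n : ℝ) + 1)) (-Real.log (1 - x) / x) := by
    have := hs.div_const x
    convert this using 2 with n
    · rfl
    rw [pow_succ]
    field_simp
  exact (hs2.tsum_eq).symm

lemma Li2_summable {x : ℝ} (hx : |x| ≤ 1) {m : ℕ} (hm : 2 ≤ m) :
    Summable (fun n : ℕ => x ^ (n + 1) / ((n : ℝ) + 1) ^ m) := by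
  apply Summable.of_norm
  apply Summable.of_nonneg_of_le (fun n => norm_nonneg _) (fun n => ?_)
    ((summable_one_div_nat_pow.mpr (by omega : 2 ≤ m)).comp_injective
      (add_left_injective 1))
  simp only [Function.comp, norm_div, norm_pow, Real.norm_eq_abs]
  rw [abs_of_pos (by positivity : (0:ℝ) < (n:ℝ)+1)]
  have hc : ((n:ℝ)+1) = ((n+1:ℕ):ℝ) := by push_cast; ring
  rw [hc]
  gcongr
  exact pow_le_one₀ (abs_nonneg x) hx

lemma Li3_hasDerivAt' {x : ℝ} (hx : |x| < 1) (hx0 : x ≠ 0) :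
    HasDerivAt Li3 (Li2 x / x) x := by
  have h := Li3_hasDerivAt hx
  convert h using 1
  have hsum : Summable (fun n : ℕ => x ^ (n + 1) / ((n : ℝ) + 1) ^ 2) :=
    Li2_summable hx.le le_rfl
  have hs : HasSum (fun n : ℕ => x ^ (n + 1) / ((n : ℝ) + 1) ^ 2) (Li2 x) := by
    rw [Li2]; exact hsum.hasSum
  have hs2 : HasSum (fun n : ℕ => x ^ n / ((n : ℝ) + 1) ^ 2) (Li2 x / x) := by
    have := hs.div_const x
    convert this using 2 with n
    · rfl
    rw [pow_succ]
    field_simp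
    ring
  exact (hs2.tsum_eq).symm

lemma Li2_continuousOn : ContinuousOn Li2 (Icc (-1 : ℝ) 1) := by
  apply continuousOn_tsum (u := fun n : ℕ => 1 / ((n + 1 : ℕ) : ℝ) ^ 2)
    (fun i => (continuous_pow _).continuousOn.div_const _) ?_ (fun n x hx => ?_)
  · exact (summable_one_div_nat_pow.mpr one_lt_two).comp_injective (add_left_injective 1)
  · have hx1 : |x| ≤ 1 := abs_le.mpr ⟨hx.1, hx.2⟩
    rw [Real.norm_eq_abs, abs_div, abs_pow, abs_of_pos (by positivity : (0:ℝ) < ((n:ℝ)+1)^2)]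
    have hc : ((n:ℝ)+1) = ((n+1:ℕ):ℝ) := by push_cast; ring
    rw [hc]
    show |x| ^ (n + 1) / ((n + 1 : ℕ) : ℝ) ^ 2 ≤ 1 / ((n + 1 : ℕ) : ℝ) ^ 2
    gcongr
    exact pow_le_one₀ (abs_nonneg x) hx1

lemma Li2_zero : Li2 0 = 0 := by
  simp [Li2]

lemma Li2_one : Li2 1 = π ^ 2 / 6 := by
  have h := hasSum_zeta_two
  have h2 := (hasSum_nat_add_iff' (f := fun n : ℕ => (1:ℝ)/((n:ℝ))^2) 1).mpr h
  simp only [Finset.range_one, Finset.sum_singleton, Nat.cast_zero, ne_eq, OfNat.ofNat_ne_zero,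
    not_false_eq_true, zero_pow, div_zero, sub_zero] at h2
  rw [Li2]
  simp only [one_pow]
  rw [← h2.tsum_eq]
  congr 1 with n
  push_cast
  ring_nf

lemma Li2_reflection {x : ℝ} (hx : x ∈ Ioo (0 : ℝ) 1) :
    Li2 x + Li2 (1 - x) + Real.log x * Real.log (1 - x) = π ^ 2 / 6 := by
  obtain ⟨hx0, hx1⟩ := hx
  set g : ℝ → ℝ := fun y => Li2 y + Li2 (1 - y) + Real.log y * Real.log (1 - y) with hg
  -- g has zero derivative on Ioo 0 1
  have hderiv : ∀ y ∈ Ioo (0 : ℝ) 1, HasDerivAt g 0 y := by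
    rintro y ⟨hy0, hy1⟩
    have hy : |y| < 1 := abs_lt.mpr ⟨by linarith, hy1⟩
    have hy' : |1 - y| < 1 := abs_lt.mpr ⟨by linarith, by linarith⟩
    have h1 : HasDerivAt Li2 (-Real.log (1 - y) / y) y := Li2_hasDerivAt' hy hy0.ne'
    have h2 : HasDerivAt (fun z : ℝ => Li2 (1 - z)) (Real.log y / (1 - y)) y := by
      have inner : HasDerivAt (fun z : ℝ => 1 - z) (-1) y := by
        simpa using (hasDerivAt_id y).const_sub 1
      have := (Li2_hasDerivAt' hy' (by linarith : (1:ℝ) - y ≠ 0)).comp y inner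
      refine this.congr_deriv ?_
      have : (1 : ℝ) - (1 - y) = y := by ring
      rw [this]
      field_simp
    have h3 : HasDerivAt (fun z : ℝ => Real.log z * Real.log (1 - z))
        (y⁻¹ * Real.log (1 - y) + Real.log y * (-(1 - y)⁻¹)) y := by
      have hl1 : HasDerivAt Real.log y⁻¹ y := Real.hasDerivAt_log hy0.ne'
      have hl2 : HasDerivAt (fun z : ℝ => Real.log (1 - z)) (-(1 - y)⁻¹) y := by
        have inner : HasDerivAt (fun z : ℝ => 1 - z) (-1) y := by
          simpa using (hasDerivAt_id y).const_sub 1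
        have := (Real.hasDerivAt_log (by linarith : (1:ℝ) - y ≠ 0)).comp y inner
        refine this.congr_deriv ?_
        ring
      exact hl1.mul hl2
    have := (h1.add h2).add h3
    refine this.congr_deriv ?_
    field_simp
    ring
  -- g is continuous on [x, 1]
  have hIcc : Icc x 1 ⊆ Icc (-1 : ℝ) 1 := Icc_subset_Icc (by linarith) le_rfl
  have hcont : ContinuousOn g (Icc x 1) := by
    have c1 : ContinuousOn Li2 (Icc x 1) := Li2_continuousOn.mono hIcc
    have c2 : ContinuousOn (fun y : ℝ => Li2 (1 - y)) (Icc x 1) := by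
      apply Li2_continuousOn.comp ((continuous_const.sub continuous_id).continuousOn)
      rintro y ⟨hy1, hy2⟩
      refine ⟨?_, ?_⟩ <;> simp only [Pi.sub_apply, id_eq] <;> linarith
    have c3 : ContinuousOn (fun y : ℝ => Real.log y * Real.log (1 - y)) (Icc x 1) := by
      rintro y hy
      rcases eq_or_lt_of_le hy.2 with hy1 | hy1
      · -- y = 1 : the hard endpoint
        subst hy1
        rw [← continuousWithinAt_diff_self]
        unfold ContinuousWithinAt
        have hval : (fun y : ℝ => Real.log y * Real.log (1 - y)) 1 = 0 := by simp
        rw [hval]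
        set s : Set ℝ := Icc x 1 \ {1} with hs
        have htend0 : Tendsto (fun y : ℝ => 1 - y) (𝓝[s] 1) (𝓝[>] (0:ℝ)) := by
          rw [tendsto_nhdsWithin_iff]
          constructor
          · have : Tendsto (fun y : ℝ => 1 - y) (𝓝 (1:ℝ)) (𝓝 (1 - 1)) :=
              (continuous_const.sub continuous_id).tendsto 1
            simpa using this.mono_left nhdsWithin_le_nhds
          · filter_upwards [eventually_mem_nhdsWithin] with y hy'
            rcases hy' with ⟨⟨_, hle⟩, hne⟩
            simp only [Set.mem_singleton_iff] at hne
            exact sub_pos.mpr (lt_of_le_of_ne hle hne)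
        have hlml : Tendsto (fun t : ℝ => Real.log t * t) (𝓝[>] (0:ℝ)) (𝓝 0) := by
          have := tendsto_log_mul_rpow_nhdsGT_zero (one_pos)
          simpa [Real.rpow_one] using this
        have hB : Tendsto (fun y : ℝ => 2 * |Real.log (1 - y) * (1 - y)|) (𝓝[s] 1) (𝓝 0) := by
          have := ((hlml.comp htend0).abs).const_mul 2
          simpa using this
        apply squeeze_zero_norm' ?_ hB
        have hhalf : ∀ᶠ y in 𝓝[s] (1:ℝ), y ∈ Ioi (1/2 : ℝ) :=
          eventually_nhdsWithin_of_eventually_nhds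
            (isOpen_Ioi.eventually_mem (show (1:ℝ) ∈ Ioi (1/2:ℝ) by norm_num))
        filter_upwards [eventually_mem_nhdsWithin, hhalf] with y hy' hyh
        rcases hy' with ⟨⟨_, hle⟩, hne⟩
        simp only [Set.mem_singleton_iff] at hne
        have hylt : y < 1 := lt_of_le_of_ne hle hne
        have hy0 : (0:ℝ) < y := lt_trans (by norm_num) hyh
        have hlogy : |Real.log y| ≤ 2 * (1 - y) := by
          have h1 : Real.log y ≤ 0 := Real.log_nonpos hy0.le hle
          rw [abs_of_nonpos h1]
          have h2 : Real.log y⁻¹ ≤ y⁻¹ - 1 := Real.log_le_sub_one_of_pos (by positivity)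
          rw [Real.log_inv] at h2
          have h3 : -Real.log y ≤ (1 - y) / y := by
            calc -Real.log y ≤ y⁻¹ - 1 := h2
              _ = (1 - y) / y := by field_simp
          have h4 : (1 - y) / y ≤ 2 * (1 - y) := by
            rw [div_le_iff₀ hy0]
            have hyh' : (1/2:ℝ) < y := hyh
            nlinarith [mul_nonneg (by linarith : (0:ℝ) ≤ 1 - y) (by linarith : (0:ℝ) ≤ 2*y - 1)]
          linarith
        have hnn : (0:ℝ) ≤ 1 - y := by linarith
        calc ‖Real.log y * Real.log (1 - y)‖ = |Real.log y| * |Real.log (1 - y)| := by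
              rw [Real.norm_eq_abs, abs_mul]
          _ ≤ 2 * (1 - y) * |Real.log (1 - y)| := mul_le_mul_of_nonneg_right hlogy (abs_nonneg _)
          _ = 2 * |Real.log (1 - y) * (1 - y)| := by rw [abs_mul, abs_of_nonneg hnn]; ring
      · -- y < 1 : plain continuity
        apply ContinuousAt.continuousWithinAt
        have h0 : (0:ℝ) < y := lt_of_lt_of_le hx0 hy.1
        exact (Real.continuousAt_log h0.ne').mul
          ((Real.continuousAt_log (by linarith : (1:ℝ) - y ≠ 0)).comp
            ((continuous_const.sub continuous_id).continuousAt))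
    exact (c1.add c2).add c3
  have := constant_of_has_deriv_right_zero hcont (fun y hy => ?_) 1 ⟨hx1.le, le_rfl⟩
  · -- this : g 1 = g x
    have hg1 : g 1 = π ^ 2 / 6 := by
      simp [hg, Li2_one, Li2_zero]
    rw [hg1] at this
    exact this.symm
  · exact (hderiv y ⟨lt_of_lt_of_le hx0 hy.1, hy.2⟩).hasDerivWithinAt

theorem key_derivative (z : ℝ) (h0 : -1 < z) (h1 : z < 1) :
    deriv (fun z : ℝ => 12 * Li3 ((z + 1) / 2)
        - 6 * Real.log ((z + 1) / 2) * Li2 ((z + 1) / 2)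
        - π ^ 2 * Real.log ((z + 1) / 2)) z
      = -6 * Li2 ((1 - z) / 2) / (z + 1) := by
  set w : ℝ := (z + 1) / 2 with hw
  have hw0 : 0 < w := by rw [hw]; linarith
  have hw1 : w < 1 := by rw [hw]; linarith
  have habs : |w| < 1 := abs_lt.mpr ⟨by linarith, hw1⟩
  have hinner : HasDerivAt (fun z : ℝ => (z + 1) / 2) (1/2) z := by
    simpa using ((hasDerivAt_id z).add_const 1).div_const 2
  have hLi3 : HasDerivAt (fun z : ℝ => Li3 ((z + 1) / 2)) (Li2 w / w * (1/2)) z :=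
    HasDerivAt.comp (h₂ := Li3) z (Li3_hasDerivAt' habs hw0.ne') hinner
  have hLi2 : HasDerivAt (fun z : ℝ => Li2 ((z + 1) / 2)) (-Real.log (1 - w) / w * (1/2)) z :=
    HasDerivAt.comp (h₂ := Li2) z (Li2_hasDerivAt' habs hw0.ne') hinner
  have hlog : HasDerivAt (fun z : ℝ => Real.log ((z + 1) / 2)) (w⁻¹ * (1/2)) z :=
    HasDerivAt.comp (h₂ := Real.log) z (Real.hasDerivAt_log hw0.ne') hinner
  have hD : HasDerivAt (fun z : ℝ => 12 * Li3 ((z + 1) / 2)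
        - 6 * Real.log ((z + 1) / 2) * Li2 ((z + 1) / 2)
        - π ^ 2 * Real.log ((z + 1) / 2))
      (12 * (Li2 w / w * (1/2))
        - (6 * (w⁻¹ * (1/2)) * Li2 w + 6 * Real.log w * (-Real.log (1 - w) / w * (1/2)))
        - π ^ 2 * (w⁻¹ * (1/2))) z := by
    have t1 := hLi3.const_mul (12 : ℝ)
    have t2 := (hlog.const_mul (6 : ℝ)).mul hLi2
    have t3 := hlog.const_mul (π ^ 2)
    exact (t1.sub t2).sub t3
  rw [hD.deriv]
  have hrefl := Li2_reflection ⟨hw0, hw1⟩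
  have h1w : (1 - z) / 2 = 1 - w := by rw [hw]; ring
  have hz1 : z + 1 = 2 * w := by rw [hw]; ring
  rw [h1w, hz1]
  have hsub : Li2 (1 - w) = π ^ 2 / 6 - Li2 w - Real.log w * Real.log (1 - w) := by
    linarith [hrefl]
  rw [hsub]
  field_simp
  ring
end
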